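/- S_n^{[k]} = Σ_{i=0}^k binom(n+i, i) A(n, k-i), and conversely A(n,p) = Σ_{i=0}^p (-1)^i binom(n+1, i) S_n^{[p-i]}, where S_n^{[k]} is the degree-n part of σ_1^k and A(n,j) = Σ_{I⊨n, ℓ(I)=j} R_I. -/

import Mathlib

/-!
Expanding the ribbons in the `S`-basis, the coefficient of `S^J` in `A(n, j)` is
`(-1)^(j - ℓ(J))` times the number `binom(n - ℓ(J), j - ℓ(J))` of compositions of length `j`
refining `J`, that is,
`A_n(t) = ∑_J t^ℓ(J) (1 - t)^(n - ℓ(J)) S^J`. The coefficient of `S^J` in `S_n^{[k]}` is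
`binom(k, ℓ(J))`, the coefficient of `t^k` in
`t^ℓ / (1 - t)^(ℓ + 1) = (1 - t)^(-(n + 1)) · t^ℓ (1 - t)^(n - ℓ)`.
Comparing coefficients of `S^J` gives the first identity; multiplying through by
`(1 - t)^(n + 1)` gives the second.
-/

/-- S^I = S_{i_1} ⋯ S_{i_r} in the free algebra on the S_m. -/
noncomputable def SI {m : ℕ} (I : Composition m) : FreeAlgebra ℚ ℕ :=
  (I.blocks.map (FreeAlgebra.ι ℚ)).prod

/-- The descent set of a composition of n, a subset of {1, ..., n-1}. -/
def desSet {n : ℕ} (I : Composition n) : Finset (Fin (n - 1)) :=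
  compositionAsSetEquiv n (compositionEquiv n I)

/-- Ribbon basis: R_I = ∑_{J coarser than I} (-1)^{ℓ(I) - ℓ(J)} S^J. -/
noncomputable def ribbon {n : ℕ} (I : Composition n) : FreeAlgebra ℚ ℕ :=
  ∑ J ∈ Finset.univ.filter (fun J : Composition n => desSet J ⊆ desSet I),
    ((-1 : ℚ)) ^ (I.length - J.length) • SI J

/-- Noncommutative Eulerian coefficient A(n, j) = ∑_{I ⊨ n, ℓ(I) = j} R_I. -/
noncomputable def eulA (n j : ℕ) : FreeAlgebra ℚ ℕ :=
  ∑ I ∈ Finset.univ.filter (fun I : Composition n => I.length = j), ribbon I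

/-- The degree-n component of σ_1^k: S_n^{[k]} = ∑_{I ⊨ n} binom(k, ℓ(I)) S^I. -/
noncomputable def Snk (n k : ℕ) : FreeAlgebra ℚ ℕ :=
  ∑ I : Composition n, (Nat.choose k I.length : ℚ) • SI I

open Finset PowerSeries

theorem Finset.card_filter_superset_card_eq {α : Type*} [Fintype α] [DecidableEq α]
    (s : Finset α) (m : ℕ) :
    #{t : Finset α | s ⊆ t ∧ #t = m} =
      if #s ≤ m then (Fintype.card α - #s).choose (m - #s) else 0 := by
  split_ifs with hsm
  · have hdisj : ∀ u ∈ powersetCard (m - #s) sᶜ, Disjoint u s := fun u hu =>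
      disjoint_left.2 fun x hx => by simpa using (mem_powersetCard.1 hu).1 hx
    rw [← card_compl, ← card_powersetCard]
    refine card_bij' (fun t _ => t \ s) (fun u _ => u ∪ s) ?_ ?_ ?_ ?_
    · simp only [mem_filter, mem_univ, true_and, mem_powersetCard]
      rintro t ⟨hst, rfl⟩
      exact ⟨fun x hx => by simp [(mem_sdiff.1 hx).2], card_sdiff_of_subset hst⟩
    · intro u hu
      simp only [mem_filter, mem_univ, true_and]
      refine ⟨subset_union_right, ?_⟩
      rw [card_union_of_disjoint (hdisj u hu), (mem_powersetCard.1 hu).2]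
      omega
    · simp only [mem_filter, mem_univ, true_and]
      rintro t ⟨hst, -⟩
      exact sdiff_union_of_subset hst
    · exact fun u hu => union_sdiff_cancel_right (hdisj u hu)
  · rw [card_eq_zero, filter_eq_empty_iff]
    rintro t - ⟨hst, rfl⟩
    exact hsm (card_le_card hst)

theorem CompositionAsSet.card_compositionAsSetEquiv_add_one {n : ℕ} (hn : 0 < n)
    (c : CompositionAsSet n) : #(compositionAsSetEquiv n c) + 1 = c.length := by
  obtain ⟨s, rfl⟩ := (compositionAsSetEquiv n).symm.surjective c
  let e : Fin (n - 1) ↪ Fin (n + 1) :=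
    ⟨fun i => ⟨i + 1, by omega⟩, fun a b h => by simpa [Fin.ext_iff] using h⟩
  have he : ∀ i, (e i : ℕ) = i + 1 := fun i => rfl
  have hb : ((compositionAsSetEquiv n).symm s).boundaries =
      insert 0 (insert (Fin.last n) (s.map e)) := by
    ext i
    simp only [compositionAsSetEquiv, Equiv.coe_fn_symm_mk, Set.toFinset_ofPred, mem_filter,
      mem_univ, true_and, mem_insert, mem_map, Fin.ext_iff, he]
    grind
  have h0 : (0 : Fin (n + 1)) ∉ insert (Fin.last n) (s.map e) := by
    simp only [mem_insert, mem_map, Fin.ext_iff, he]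
    grind
  have hl : Fin.last n ∉ s.map e := by
    simp only [mem_map, Fin.ext_iff, he]
    grind
  rw [CompositionAsSet.length, hb, card_insert_of_notMem h0, card_insert_of_notMem hl, card_map,
    Equiv.apply_symm_apply]
  rfl

theorem sum_smul_sum_smul {ι κ R M : Type*} [CommSemiring R] [AddCommMonoid M] [Module R M]
    (s : Finset ι) (t : Finset κ) (a : ι → R) (b : ι → κ → R) (v : κ → M) :
    ∑ i ∈ s, a i • ∑ j ∈ t, b i j • v j = ∑ j ∈ t, (∑ i ∈ s, a i * b i j) • v j := by
  simp only [smul_sum, smul_smul, sum_smul]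
  exact sum_comm

section Series

variable {R : Type*} [CommRing R]

theorem coeff_one_sub_X_pow (m j : ℕ) :
    coeff j ((1 - X : R⟦X⟧) ^ m) = (-1) ^ j * m.choose j := by
  have : (1 - X : R⟦X⟧) ^ m =
      rescale (-1) (((1 + Polynomial.X) ^ m : Polynomial R) : R⟦X⟧) := by
    simp [rescale_X, sub_eq_add_neg]
  rw [this, coeff_rescale, Polynomial.coeff_coe, Polynomial.coeff_one_add_X_pow]

variable (R) in
noncomputable def eulerianWeight (n l : ℕ) : R⟦X⟧ := X ^ l * (1 - X) ^ (n - l)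

theorem coeff_eulerianWeight (n l j : ℕ) :
    coeff j (eulerianWeight R n l) =
      if l ≤ j then (-1) ^ (j - l) * ((n - l).choose (j - l) : R) else 0 := by
  rw [eulerianWeight, coeff_X_pow_mul']
  split_ifs <;> simp only [coeff_one_sub_X_pow]

theorem coeff_X_pow_mul_invOneSubPow (l k : ℕ) :
    coeff k (X ^ l * (invOneSubPow R (l + 1)).val) = (k.choose l : R) := by
  rw [coeff_X_pow_mul', invOneSubPow_val_succ_eq_mk_add_choose]
  split_ifs with h
  · rw [coeff_mk, Nat.add_sub_cancel' h]
  · rw [Nat.choose_eq_zero_of_lt (not_le.1 h), Nat.cast_zero]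

theorem invOneSubPow_mul_eulerianWeight {n l : ℕ} (hl : l ≤ n) :
    (invOneSubPow R (n + 1)).val * eulerianWeight R n l =
      X ^ l * (invOneSubPow R (l + 1)).val := by
  obtain ⟨m, rfl⟩ := Nat.exists_eq_add_of_le hl
  rw [eulerianWeight, Nat.add_sub_cancel_left, mul_left_comm, mul_comm (invOneSubPow R _).val,
    show l + m + 1 = l + 1 + m by ring, one_sub_pow_mul_invOneSubPow_val_add_eq_invOneSubPow_val]

theorem one_sub_X_pow_mul_X_pow_mul_invOneSubPow {n l : ℕ} (hl : l ≤ n) :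
    (1 - X) ^ (n + 1) * (X ^ l * (invOneSubPow R (l + 1)).val) = eulerianWeight R n l := by
  rw [← invOneSubPow_mul_eulerianWeight hl, ← mul_assoc, ← invOneSubPow_inv_eq_one_sub_pow,
    Units.inv_val, one_mul]

theorem coeff_invOneSubPow_mul (d k : ℕ) (f : R⟦X⟧) :
    coeff k ((invOneSubPow R (d + 1)).val * f) =
      ∑ i ∈ range (k + 1), ((d + i).choose i : R) * coeff (k - i) f := by
  rw [coeff_mul, Nat.sum_antidiagonal_eq_sum_range_succ (fun a b => coeff a _ * coeff b f)]
  refine sum_congr rfl fun i _ => ?_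
  rw [invOneSubPow_val_succ_eq_mk_add_choose, coeff_mk, Nat.choose_symm_add]

theorem coeff_one_sub_X_pow_mul (m k : ℕ) (f : R⟦X⟧) :
    coeff k ((1 - X) ^ m * f) =
      ∑ i ∈ range (k + 1), ((-1) ^ i * (m.choose i : R)) * coeff (k - i) f := by
  rw [coeff_mul, Nat.sum_antidiagonal_eq_sum_range_succ (fun a b => coeff a _ * coeff b f)]
  simp only [coeff_one_sub_X_pow]

end Series

theorem length_eq_card_desSet_add_one {n : ℕ} (hn : 0 < n) (I : Composition n) :
    I.length = #(desSet I) + 1 := by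
  rw [desSet, CompositionAsSet.card_compositionAsSetEquiv_add_one hn]
  simp [compositionEquiv]

theorem card_filter_length_eq_desSet_subset {n : ℕ} (J : Composition n) (j : ℕ) :
    #{I : Composition n | I.length = j ∧ desSet J ⊆ desSet I} =
      if J.length ≤ j then (n - J.length).choose (j - J.length) else 0 := by
  rcases Nat.eq_zero_or_pos n with rfl | hn
  · have hlen : ∀ I : Composition 0, I.length = 0 := fun I => Nat.le_zero.1 I.length_le
    have hcard : Fintype.card (Composition 0) = 1 := composition_card 0
    rcases j with _ | j <;> simp [hlen, hcard]
  have hlen : ∀ I, I.length = #(desSet I) + 1 := length_eq_card_desSet_add_one hn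
  rcases j with _ | j
  · simp [hlen]
  rw [card_equiv ((compositionEquiv n).trans (compositionAsSetEquiv n))
      (t := {T | desSet J ⊆ T ∧ #T = j}) (fun I => by simp [hlen I]; exact and_comm),
    card_filter_superset_card_eq, Fintype.card_fin, hlen J]
  simp only [Nat.add_le_add_iff_right]
  split_ifs <;> congr 1 <;> omega

theorem eulA_eq_sum_coeff_eulerianWeight_smul (n j : ℕ) :
    eulA n j = ∑ J : Composition n, coeff j (eulerianWeight ℚ n J.length) • SI J := by
  simp only [eulA, ribbon]
  rw [sum_comm' (t' := univ)
    (s' := fun J => {I : Composition n | I.length = j ∧ desSet J ⊆ desSet I}) (by simp)]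
  refine sum_congr rfl fun J _ => ?_
  have hsign : ∀ I ∈ ({I : Composition n | I.length = j ∧ desSet J ⊆ desSet I} : Finset _),
      (-1 : ℚ) ^ (I.length - J.length) • SI J = (-1 : ℚ) ^ (j - J.length) • SI J :=
    fun I hI => by rw [(mem_filter.1 hI).2.1]
  rw [sum_congr rfl hsign, sum_const, card_filter_length_eq_desSet_subset, coeff_eulerianWeight,
    ← Nat.cast_smul_eq_nsmul ℚ, smul_smul]
  split_ifs <;> simp [mul_comm]

theorem Snk_eulA_inversion_general (n : ℕ) :
    (∀ k : ℕ, Snk n k =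
      ∑ i ∈ Finset.range (k + 1), (Nat.choose (n + i) i : ℚ) • eulA n (k - i)) ∧
    (∀ p : ℕ, eulA n p =
      ∑ i ∈ Finset.range (p + 1),
        ((-1 : ℚ) ^ i * (Nat.choose (n + 1) i : ℚ)) • Snk n (p - i)) := by
  simp only [eulA_eq_sum_coeff_eulerianWeight_smul, Snk, sum_smul_sum_smul]
  refine ⟨fun k => sum_congr rfl fun J _ => ?_, fun p => sum_congr rfl fun J _ => ?_⟩
  · rw [← coeff_invOneSubPow_mul, invOneSubPow_mul_eulerianWeight J.length_le,
      coeff_X_pow_mul_invOneSubPow]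
  · rw [← one_sub_X_pow_mul_X_pow_mul_invOneSubPow J.length_le, coeff_one_sub_X_pow_mul]
    simp only [coeff_X_pow_mul_invOneSubPow]

theorem Snk_eulA_inversion (n : ℕ) (hn : 0 < n) :
    (∀ k : ℕ, Snk n k =
      ∑ i ∈ Finset.range (k + 1), (Nat.choose (n + i) i : ℚ) • eulA n (k - i)) ∧
    (∀ p : ℕ, eulA n p =
      ∑ i ∈ Finset.range (p + 1),
        ((-1 : ℚ) ^ i * (Nat.choose (n + 1) i : ℚ)) • Snk n (p - i)) :=
  Snk_eulA_inversion_general n
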